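/- Convergence of PnP-ADMM. Let n ≥ 1, γ > 0, and let g : ℝ^n → ℝ be convex and Lipschitz continuous with constant L. Let D : ℝ^n → ℝ^n be a map whose residual I − D is firmly nonexpansive, let G := prox_{γg}, and define S(v) := D(v) − G(2·D(v) − v). Assume there exists v* ∈ ℝ^n with S(v*) = 0, and set x* := D(v*). From initial points x^0, s^0 ∈ ℝ^n define the sequences z^k := G(x^{k−1} + s^{k−1}), x^k := D(z^k − s^{k−1}), s^k := s^{k−1} + x^k − z^k, and v^k := z^k − s^{k−1}, for k ≥ 1. Assume there is a constant R < ∞ such that ‖x^k − x*‖ ≤ R for all k ≥ 0. Then for every t ≥ 1, (1/t)·Σ_{k=1}^t ‖S(v^k)‖² ≤ (R + 2γL)²/t. -/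

import Mathlib

open scoped RealInnerProductSpace

/-- Euclidean space ℝ^n. -/
abbrev En (n : ℕ) := EuclideanSpace ℝ (Fin n)

/-- `G` is the proximal operator `prox_{γf}`: for every `z`, `G z` minimizes
`x ↦ (1/2)‖x − z‖² + γ f x` over `ℝ^n`. -/
def IsProx {n : ℕ} (γ : ℝ) (f : En n → ℝ) (G : En n → En n) : Prop :=
  ∀ z x : En n,
    (1 / 2 : ℝ) * ‖G z - z‖ ^ 2 + γ * f (G z) ≤ (1 / 2 : ℝ) * ‖x - z‖ ^ 2 + γ * f x

/-- A map `S : ℝ^n → ℝ^n` is firmly nonexpansive if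
`⟨S x − S y, x − y⟩ ≥ ‖S x − S y‖²` for all `x, y`. -/
def FirmlyNonexpansive {n : ℕ} (S : En n → En n) : Prop :=
  ∀ x y : En n, ‖S x - S y‖ ^ 2 ≤ ⟪S x - S y, x - y⟫

/-! The shadow sequence `v k` is the Douglas–Rachford iteration `v (k + 1) = v k - S (v k)`.
Since `I - D` and the proximal map are firmly nonexpansive, so is `S`, and each step therefore
decreases `‖v k - v*‖²` by at least `‖S (v k)‖²`; telescoping bounds the whole sum by
`‖v 1 - v*‖²`. The proximal map of an `L`-Lipschitz function moves no point by more than `γ L`,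
and both `v 1 - x 0` and `v* - x*` are such displacements, whence `‖v 1 - v*‖ ≤ R + 2 γ L`. -/

open Filter Topology

lemma nonneg_of_forall_add_mul_nonneg {a b : ℝ}
    (h : ∀ θ : ℝ, 0 < θ → θ ≤ 1 → 0 ≤ a + θ * b) : 0 ≤ a := by
  have hlim : Tendsto (fun θ : ℝ => a + θ * b) (𝓝[>] 0) (𝓝 a) := by
    have hcont : Continuous (fun θ : ℝ => a + θ * b) := by fun_prop
    simpa using (hcont.tendsto 0).mono_left nhdsWithin_le_nhds
  refine ge_of_tendsto hlim ?_
  filter_upwards [Ioc_mem_nhdsGT zero_lt_one] with θ hθ using h θ hθ.1 hθ.2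

lemma nonneg_of_abs_sub_le_mul_norm {E : Type*} [NormedAddCommGroup E] [Nontrivial E]
    {g : E → ℝ} {L : ℝ} (hlip : ∀ x y : E, |g x - g y| ≤ L * ‖x - y‖) : 0 ≤ L := by
  obtain ⟨x, hx⟩ := exists_ne (0 : E)
  have h := (abs_nonneg _).trans (hlip x 0)
  rw [sub_zero] at h
  exact (mul_nonneg_iff_of_pos_right (norm_pos_iff.2 hx)).1 h

namespace IsProx

variable {n : ℕ} {γ : ℝ} {g : En n → ℝ} {G : En n → En n}

/-- Compare `G z` with the points of the segment towards `y` and let the step tend to zero. -/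
theorem inner_sub_le (hG : IsProx γ g G) (hγ : 0 ≤ γ) (hconv : ConvexOn ℝ Set.univ g)
    (z y : En n) : ⟪z - G z, y - G z⟫ ≤ γ * (g y - g (G z)) := by
  set p := G z
  refine sub_nonneg.1 (nonneg_of_forall_add_mul_nonneg (b := ‖y - p‖ ^ 2 / 2) fun θ hθ hθ1 => ?_)
  have hmin := hG z (p + θ • (y - p))
  have hcvx : g (p + θ • (y - p)) ≤ (1 - θ) * g p + θ * g y := by
    have h := hconv.2 (Set.mem_univ p) (Set.mem_univ y) (sub_nonneg.2 hθ1) hθ.le (by ring)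
    rwa [show (1 - θ) • p + θ • y = p + θ • (y - p) by module] at h
  have hexp : ‖p + θ • (y - p) - z‖ ^ 2
      = ‖p - z‖ ^ 2 - 2 * θ * ⟪z - p, y - p⟫ + θ ^ 2 * ‖y - p‖ ^ 2 := by
    rw [show p + θ • (y - p) - z = (p - z) + θ • (y - p) by abel, norm_add_sq_real,
      real_inner_smul_right, norm_smul, mul_pow, Real.norm_eq_abs, sq_abs,
      ← neg_sub z p, inner_neg_left]
    ring
  rw [hexp] at hmin
  have hscaled : 0 ≤ θ * (γ * (g y - g p) - ⟪z - p, y - p⟫ + θ * (‖y - p‖ ^ 2 / 2)) := by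
    linear_combination hmin + mul_le_mul_of_nonneg_left hcvx hγ
  exact (mul_nonneg_iff_of_pos_left hθ).1 hscaled

theorem firmlyNonexpansive (hG : IsProx γ g G) (hγ : 0 ≤ γ) (hconv : ConvexOn ℝ Set.univ g) :
    FirmlyNonexpansive G := by
  intro z w
  have hz := hG.inner_sub_le hγ hconv z (G w)
  have hw := hG.inner_sub_le hγ hconv w (G z)
  have hsum : ⟪z - G z, G w - G z⟫ + ⟪w - G w, G z - G w⟫
      = ‖G z - G w‖ ^ 2 - ⟪G z - G w, z - w⟫ := by
    rw [← neg_sub (G z) (G w), inner_neg_right, neg_add_eq_sub, ← inner_sub_left,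
      show w - G w - (z - G z) = (G z - G w) - (z - w) by abel, inner_sub_left,
      real_inner_self_eq_norm_sq, real_inner_comm]
  linarith

theorem norm_sub_le (hG : IsProx γ g G) (hγ : 0 ≤ γ) (hconv : ConvexOn ℝ Set.univ g)
    {L : ℝ} (hL : 0 ≤ L) (hlip : ∀ x y : En n, |g x - g y| ≤ L * ‖x - y‖) (z : En n) :
    ‖G z - z‖ ≤ γ * L := by
  have h := hG.inner_sub_le hγ hconv z z
  rw [real_inner_self_eq_norm_sq] at h
  rw [norm_sub_rev]
  have hsq : ‖z - G z‖ * ‖z - G z‖ ≤ γ * L * ‖z - G z‖ := by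
    rw [← sq, mul_assoc]
    exact h.trans (mul_le_mul_of_nonneg_left ((le_abs_self _).trans (hlip z (G z))) hγ)
  rcases (norm_nonneg (z - G z)).eq_or_lt with h0 | h0
  · rw [← h0]; positivity
  · exact le_of_mul_le_mul_right hsq h0

end IsProx

namespace FirmlyNonexpansive

variable {n : ℕ} {D G S : En n → En n}

theorem of_id_sub (hD : FirmlyNonexpansive (fun x => x - D x)) : FirmlyNonexpansive D := by
  intro u w
  have h : ‖u - D u - (w - D w)‖ ^ 2 ≤ ⟪u - D u - (w - D w), u - w⟫ := hD u w
  rw [show u - D u - (w - D w) = (u - w) - (D u - D w) by abel, norm_sub_sq_real,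
    inner_sub_left (u - w) (D u - D w), real_inner_self_eq_norm_sq,
    real_inner_comm (D u - D w)] at h
  linarith

theorem sub_comp_two_smul_sub (hD : FirmlyNonexpansive D) (hG : FirmlyNonexpansive G) :
    FirmlyNonexpansive (fun v => D v - G ((2 : ℝ) • D v - v)) := by
  intro u w
  have hDuw := hD u w
  have hGuw := hG ((2 : ℝ) • D u - u) ((2 : ℝ) • D w - w)
  rw [show (2 : ℝ) • D u - u - ((2 : ℝ) • D w - w) = (2 : ℝ) • (D u - D w) - (u - w) by module]
    at hGuw
  show ‖D u - G _ - (D w - G _)‖ ^ 2 ≤ ⟪D u - G _ - (D w - G _), u - w⟫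
  rw [show ∀ a b c e : En n, a - b - (c - e) = (a - c) - (b - e) from fun _ _ _ _ => by abel]
  set m := D u - D w
  set r := G ((2 : ℝ) • D u - u) - G ((2 : ℝ) • D w - w)
  rw [inner_sub_right, real_inner_smul_right] at hGuw
  rw [norm_sub_sq_real, inner_sub_left m r]
  linarith [real_inner_comm m r]

theorem norm_sq_add_norm_sub_sq_le (hS : FirmlyNonexpansive S) {v₀ : En n} (h₀ : S v₀ = 0)
    (v : En n) : ‖S v‖ ^ 2 + ‖v - S v - v₀‖ ^ 2 ≤ ‖v - v₀‖ ^ 2 := by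
  have h := hS v v₀
  rw [h₀, sub_zero] at h
  rw [show v - S v - v₀ = (v - v₀) - S v by abel, norm_sub_sq_real, real_inner_comm]
  linarith

theorem sum_sq_norm_iterate_le (hS : FirmlyNonexpansive S) {v₀ : En n} (h₀ : S v₀ = 0)
    {v : ℕ → En n} (hv : ∀ k, 1 ≤ k → v (k + 1) = v k - S (v k)) (t : ℕ) :
    ∑ k ∈ Finset.Icc 1 t, ‖S (v k)‖ ^ 2 ≤ ‖v 1 - v₀‖ ^ 2 := by
  suffices ∑ k ∈ Finset.Icc 1 t, ‖S (v k)‖ ^ 2 + ‖v (t + 1) - v₀‖ ^ 2 ≤ ‖v 1 - v₀‖ ^ 2 by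
    linarith [sq_nonneg ‖v (t + 1) - v₀‖]
  induction t with
  | zero => simp
  | succ t ih =>
    rw [Finset.sum_Icc_succ_top (by omega), hv (t + 1) (by omega)]
    linarith [hS.norm_sq_add_norm_sub_sq_le h₀ (v (t + 1))]

end FirmlyNonexpansive

theorem admm_iterate_succ {n : ℕ} {D G : En n → En n} {x z s v : ℕ → En n}
    (hz : ∀ k : ℕ, 1 ≤ k → z k = G (x (k - 1) + s (k - 1)))
    (hx : ∀ k : ℕ, 1 ≤ k → x k = D (z k - s (k - 1)))
    (hs : ∀ k : ℕ, 1 ≤ k → s k = s (k - 1) + x k - z k)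
    (hv : ∀ k : ℕ, 1 ≤ k → v k = z k - s (k - 1)) {k : ℕ} (hk : 1 ≤ k) :
    v (k + 1) = v k - (D (v k) - G ((2 : ℝ) • D (v k) - v k)) := by
  have hxk : x k = D (v k) := by rw [hx k hk, hv k hk]
  have hsk : s k = x k - v k := by rw [hs k hk, hv k hk]; abel
  rw [hv (k + 1) (by omega), hz (k + 1) (by omega), Nat.add_sub_cancel, hsk, ← hxk,
    show x k + (x k - v k) = (2 : ℝ) • x k - v k by module]
  abel

theorem pnp_admm_convergence_general {n : ℕ} (hn : 1 ≤ n)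
    (γ : ℝ) (hγ : 0 < γ)
    (g : En n → ℝ) (hconv : ConvexOn ℝ Set.univ g)
    (L : ℝ) (hlip : ∀ x y : En n, |g x - g y| ≤ L * ‖x - y‖)
    (D : En n → En n) (hD : FirmlyNonexpansive (fun x : En n => x - D x))
    (G : En n → En n) (hG : IsProx γ g G)
    (S : En n → En n) (hS : ∀ v : En n, S v = D v - G ((2 : ℝ) • D v - v))
    (vstar : En n) (hvstar : S vstar = 0)
    (xstar : En n) (hxstar : xstar = D vstar)
    (x z s v : ℕ → En n)
    (hz : ∀ k : ℕ, 1 ≤ k → z k = G (x (k - 1) + s (k - 1)))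
    (hx : ∀ k : ℕ, 1 ≤ k → x k = D (z k - s (k - 1)))
    (hs : ∀ k : ℕ, 1 ≤ k → s k = s (k - 1) + x k - z k)
    (hv : ∀ k : ℕ, 1 ≤ k → v k = z k - s (k - 1))
    (R : ℝ) (hR : ∀ k : ℕ, ‖x k - xstar‖ ≤ R)
    (t : ℕ) :
    (1 / (t : ℝ)) * ∑ k ∈ Finset.Icc 1 t, ‖S (v k)‖ ^ 2
      ≤ (R + 2 * γ * L) ^ 2 / (t : ℝ) := by
  have hL : 0 ≤ L :=
    have : Nonempty (Fin n) := ⟨⟨0, hn⟩⟩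
    nonneg_of_abs_sub_le_mul_norm hlip
  have hres := hG.norm_sub_le hγ.le hconv hL hlip
  have hSfirm : FirmlyNonexpansive S := by
    rw [funext hS]
    exact hD.of_id_sub.sub_comp_two_smul_sub (hG.firmlyNonexpansive hγ.le hconv)
  have hiter (k : ℕ) (hk : 1 ≤ k) : v (k + 1) = v k - S (v k) := by
    rw [hS]; exact admm_iterate_succ hz hx hs hv hk
  have hGxstar : G ((2 : ℝ) • xstar - vstar) = xstar := by
    rw [hxstar, eq_comm, ← sub_eq_zero, ← hS, hvstar]
  have hv1 : ‖v 1 - vstar‖ ≤ R + 2 * γ * L :=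
    calc ‖v 1 - vstar‖
        = ‖(G (x 0 + s 0) - (x 0 + s 0)) + (x 0 - xstar)
            - (G ((2 : ℝ) • xstar - vstar) - ((2 : ℝ) • xstar - vstar))‖ := by
          rw [hv 1 le_rfl, hz 1 le_rfl, hGxstar]; congr 1; module
      _ ≤ γ * L + R + γ * L := norm_sub_le_of_le (norm_add_le_of_le (hres _) (hR 0)) (hres _)
      _ = R + 2 * γ * L := by ring
  have hsum := (hSfirm.sum_sq_norm_iterate_le hvstar hiter t).trans
    (pow_le_pow_left₀ (norm_nonneg _) hv1 2)
  rw [one_div_mul_eq_div]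
  exact div_le_div_of_nonneg_right hsum t.cast_nonneg

/-- Convergence of PnP-ADMM. -/
theorem pnp_admm_convergence {n : ℕ} (hn : 1 ≤ n)
    (γ : ℝ) (hγ : 0 < γ)
    (g : En n → ℝ) (hconv : ConvexOn ℝ Set.univ g)
    (L : ℝ) (hlip : ∀ x y : En n, |g x - g y| ≤ L * ‖x - y‖)
    (D : En n → En n) (hD : FirmlyNonexpansive (fun x : En n => x - D x))
    (G : En n → En n) (hG : IsProx γ g G)
    (S : En n → En n) (hS : ∀ v : En n, S v = D v - G ((2 : ℝ) • D v - v))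
    (vstar : En n) (hvstar : S vstar = 0)
    (xstar : En n) (hxstar : xstar = D vstar)
    (x0 s0 : En n)
    (x z s v : ℕ → En n)
    (hx0 : x 0 = x0) (hs0 : s 0 = s0)
    (hz : ∀ k : ℕ, 1 ≤ k → z k = G (x (k - 1) + s (k - 1)))
    (hx : ∀ k : ℕ, 1 ≤ k → x k = D (z k - s (k - 1)))
    (hs : ∀ k : ℕ, 1 ≤ k → s k = s (k - 1) + x k - z k)
    (hv : ∀ k : ℕ, 1 ≤ k → v k = z k - s (k - 1))
    (R : ℝ) (hR : ∀ k : ℕ, ‖x k - xstar‖ ≤ R)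
    (t : ℕ) (ht : 1 ≤ t) :
    (1 / (t : ℝ)) * ∑ k ∈ Finset.Icc 1 t, ‖S (v k)‖ ^ 2
      ≤ (R + 2 * γ * L) ^ 2 / (t : ℝ) :=
  pnp_admm_convergence_general hn γ hγ g hconv L hlip D hD G hG S hS vstar hvstar xstar hxstar x z s
    v hz hx hs hv R hR t
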